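/- Let n ≥ 2 and λ₁, …, λₙ be positive real numbers such that ∑ᵢ 1/λᵢ ≤ C and ∏ᵢ λᵢ ≤ D. Then ∑ᵢ λᵢ ≤ C^{n-1}·D/(n-1)!. -/

import Mathlib

open Finset

open scoped Nat

/-! With `x i = (lam i)⁻¹` we have `lam i = (∏ lam) * ∏_{j ≠ i} x j`, so `∑ lam ≤ D * e_{n-1}(x)`.
Expanding `(∑ x) ^ k` produces every product of `k` distinct `x`'s at least `k!` times, hence
`k! * e_k(x) ≤ (∑ x) ^ k ≤ C ^ k` for nonnegative `x`. -/

theorem pow_succ_add_mul_pow_le_add_pow {R : Type*} [CommSemiring R] [PartialOrder R]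
    [IsOrderedRing R] {a b : R} (ha : 0 ≤ a) (hb : 0 ≤ b) (k : ℕ) :
    b ^ (k + 1) + (k + 1) * a * b ^ k ≤ (a + b) ^ (k + 1) := by
  induction k with
  | zero => simp [add_comm]
  | succ k ih =>
    have hk : (0 : R) ≤ k + 1 := add_nonneg k.cast_nonneg zero_le_one
    calc _ ≤ _ + (k + 1) * a ^ 2 * b ^ k :=
          le_add_of_nonneg_right (mul_nonneg (mul_nonneg hk (pow_nonneg ha 2)) (pow_nonneg hb k))
      _ = (b ^ (k + 1) + (k + 1) * a * b ^ k) * (a + b) := by push_cast; ring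
      _ ≤ (a + b) ^ (k + 1) * (a + b) := by gcongr
      _ = (a + b) ^ (k + 1 + 1) := (pow_succ _ _).symm

namespace Multiset

section CommSemiring

variable {R : Type*} [CommSemiring R]

theorem esymm_cons_succ (a : R) (s : Multiset R) (k : ℕ) :
    (a ::ₘ s).esymm (k + 1) = s.esymm (k + 1) + a * s.esymm k := by
  simp [esymm, map_map, sum_map_mul_left]

variable [PartialOrder R] [IsOrderedRing R]

theorem factorial_mul_esymm_le_sum_pow {s : Multiset R} (hs : ∀ a ∈ s, 0 ≤ a) (k : ℕ) :
    (k ! : R) * s.esymm k ≤ s.sum ^ k := by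
  induction s using Multiset.induction_on generalizing k with
  | empty => cases k <;> simp [esymm, powersetCard_zero_right]
  | cons a s ih =>
    have ha : 0 ≤ a := hs a (mem_cons_self a s)
    have hs : ∀ b ∈ s, 0 ≤ b := fun b hb ↦ hs b (mem_cons_of_mem hb)
    cases k with
    | zero => simp [esymm]
    | succ k =>
      have hka : (0 : R) ≤ (k + 1) * a := mul_nonneg (add_nonneg k.cast_nonneg zero_le_one) ha
      calc ((k + 1)! : R) * (a ::ₘ s).esymm (k + 1)
          = (k + 1)! * s.esymm (k + 1) + (k + 1) * a * (k ! * s.esymm k) := by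
            rw [esymm_cons_succ, Nat.factorial_succ]; push_cast; ring
        _ ≤ s.sum ^ (k + 1) + (k + 1) * a * s.sum ^ k := by gcongr <;> exact ih hs _
        _ ≤ (a ::ₘ s).sum ^ (k + 1) := by
          rw [sum_cons]
          exact pow_succ_add_mul_pow_le_add_pow ha (sum_nonneg hs) k

end CommSemiring

end Multiset

namespace Finset

variable {ι : Type*} [DecidableEq ι]

theorem powersetCard_card_sub_one {s : Finset ι} (hs : s.Nonempty) :
    s.powersetCard (#s - 1) = s.image s.erase := by
  ext t
  simp only [mem_powersetCard, mem_image]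
  constructor
  · rintro ⟨hts, hcard⟩
    obtain ⟨i, hi⟩ : ∃ i, s \ t = {i} := card_eq_one.mp <| by
      rw [card_sdiff_of_subset hts, hcard]; have := hs.card_pos; omega
    refine ⟨i, (mem_sdiff.mp (hi ▸ mem_singleton_self i)).1, ?_⟩
    rw [← sdiff_singleton_eq_erase, ← hi, sdiff_sdiff_eq_self hts]
  · rintro ⟨i, hi, rfl⟩
    exact ⟨erase_subset i s, card_erase_of_mem hi⟩

theorem sum_powersetCard_card_sub_one {M : Type*} [AddCommMonoid M] {s : Finset ι}
    (hs : s.Nonempty) (f : Finset ι → M) :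
    ∑ t ∈ s.powersetCard (#s - 1), f t = ∑ i ∈ s, f (s.erase i) := by
  rw [powersetCard_card_sub_one hs, sum_image (erase_injOn s)]

end Finset

theorem sum_le_of_sum_inv_le_of_prod_le
    (n : ℕ) (hn : 2 ≤ n) (lam : Fin n → ℝ) (hpos : ∀ i, 0 < lam i)
    (C D : ℝ) (hC : ∑ i, 1 / lam i ≤ C) (hD : ∏ i, lam i ≤ D) :
    ∑ i, lam i ≤ C ^ (n - 1) * D / (Nat.factorial (n - 1) : ℝ) := by
  set x : Fin n → ℝ := fun i ↦ (lam i)⁻¹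
  have hx : ∀ i, 0 ≤ x i := fun i ↦ (inv_pos.mpr (hpos i)).le
  have hlam : ∀ i, lam i ≤ D * ∏ j ∈ univ.erase i, x j := fun i ↦ by
    have hprod : lam i = (∏ j, lam j) * ∏ j ∈ univ.erase i, x j := by
      rw [← mul_prod_erase univ lam (mem_univ i), mul_assoc, ← prod_mul_distrib]
      simp [x, mul_inv_cancel₀ (hpos _).ne']
    rw [hprod]
    exact mul_le_mul_of_nonneg_right hD (prod_nonneg fun j _ ↦ hx j)
  have hesymm : ∑ i, ∏ j ∈ univ.erase i, x j = (univ.val.map x).esymm (n - 1) := by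
    have := sum_powersetCard_card_sub_one (univ_nonempty_iff.mpr ⟨⟨0, by omega⟩⟩)
      fun t : Finset (Fin n) ↦ ∏ j ∈ t, x j
    rw [card_univ, Fintype.card_fin] at this
    rw [esymm_map_val, this]
  have hbound : (univ.val.map x).esymm (n - 1) ≤ C ^ (n - 1) / (n - 1)! := by
    rw [le_div_iff₀' (by positivity)]
    exact (Multiset.factorial_mul_esymm_le_sum_pow (by simpa using fun i ↦ hx i) _).trans
      (pow_le_pow_left₀ (sum_nonneg fun i _ ↦ hx i) (by simpa [x] using hC) _)
  have hD₀ : 0 ≤ D := (prod_pos fun i _ ↦ hpos i).le.trans hD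
  calc ∑ i, lam i ≤ D * ∑ i, ∏ j ∈ univ.erase i, x j := by
        rw [mul_sum]; exact sum_le_sum fun i _ ↦ hlam i
    _ ≤ D * (C ^ (n - 1) / (n - 1)!) := by
        rw [hesymm]; exact mul_le_mul_of_nonneg_left hbound hD₀
    _ = C ^ (n - 1) * D / (n - 1)! := by ring
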